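/- Let t ∈ C(C{a,b}) have no ports. Then μ(t) is densely antiregular if and only if (i) no node of t is of kind 1, and (ii) every node of t has a descendant v such that either the label of v is of kind 2, or all nodes of t|_v are of kind 4 and μ(t|_v) is densely antiregular. -/
import Mathlib


namespace OmegaClone

/-- A (possibly infinite) raw tree over a ranked set `A`, with ports.
Positions are lists of child indices; a node is labeled either by a letter
`⟨k, x⟩` (a letter `x` of rank `k`, having `k` children `0,…,k-1`) or by a
port name `j ∈ ℕ` (a leaf). `none` means the position is not a node. -/
def RawTree (A : ℕ → Type) : Type :=
  List ℕ → Option ((Σ k : ℕ, A k) ⊕ ℕ)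

/-- `t` is a term of rank `n` over `A` (an element of rank `n` of `CA`):
the root exists and is not a port (excluding the trivial port-tree), a
position `w ++ [i]` is a node iff `w` is labeled by a letter of rank `> i`,
all port names are `< n`, and every port name `< n` occurs. -/
def IsTerm (A : ℕ → Type) (n : ℕ) (t : RawTree A) : Prop :=
  (∃ k x, t [] = some (Sum.inl ⟨k, x⟩)) ∧
  (∀ w i, (t (w ++ [i])).isSome ↔ ∃ k x, t w = some (Sum.inl ⟨k, x⟩) ∧ i < k) ∧
  (∀ w j, t w = some (Sum.inr j) → j < n) ∧
  (∀ j, j < n → ∃ w, t w = some (Sum.inr j))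

/-- Trees whose node labels are themselves raw trees over `A`
(i.e. raw trees over the ranked set `CA`). -/
abbrev OuterTree (A : ℕ → Type) : Type := RawTree (fun _ => RawTree A)

/-- `t ∈ C(CA)` has rank `n`: it is a term of rank `n` whose node labels are
terms of the rank given by the arity of the node. -/
def IsTerm2 (A : ℕ → Type) (n : ℕ) (t : OuterTree A) : Prop :=
  IsTerm (fun _ => RawTree A) n t ∧
  ∀ w k s, t w = some (Sum.inl ⟨k, s⟩) → IsTerm A k s

/-- Auxiliary state for computing the flattening: either a pair
(node `v` of the outer tree, position `w` inside the label of `v`),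
or a port name of the outer tree. -/
def resolve (A : ℕ → Type) (t : OuterTree A) (v : List ℕ) :
    Option ((List ℕ × List ℕ) ⊕ ℕ) :=
  match t v with
  | some (Sum.inl _) => some (Sum.inl (v, ([] : List ℕ)))
  | some (Sum.inr j) => some (Sum.inr j)
  | none => none

/-- One navigation step of the flattening: from the current state, move to
child number `i`; a port `j` occurring inside a label redirects to the
`j`-th child of the current outer node (substitution). -/
def stepF (A : ℕ → Type) (t : OuterTree A)
    (st : (List ℕ × List ℕ) ⊕ ℕ) (i : ℕ) :
    Option ((List ℕ × List ℕ) ⊕ ℕ) :=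
  match st with
  | Sum.inr _ => none
  | Sum.inl (v, w) =>
    match t v with
    | some (Sum.inl ⟨_, s⟩) =>
      match s (w ++ [i]) with
      | some (Sum.inl _) => some (Sum.inl (v, w ++ [i]))
      | some (Sum.inr j) => resolve A t (v ++ [j])
      | none => none
    | _ => none

/-- The flattening `μ : C(CA) → CA`: the label of `μ(t)` at a position `p` is
obtained by navigating through `t`, substituting (recursively) the flattened
child subtrees of each node into the ports of its label. -/
def flatten (A : ℕ → Type) (t : OuterTree A) : RawTree A :=
  fun p =>
    (p.foldl (fun ost i => ost.bind (fun st => stepF A t st i))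
        (resolve A t [])).bind
      (fun st =>
        match st with
        | Sum.inl (v, w) =>
          match t v with
          | some (Sum.inl ⟨_, s⟩) =>
            match s w with
            | some (Sum.inl x) => some (Sum.inl x)
            | _ => none
          | _ => none
        | Sum.inr j => some (Sum.inr j))

/-- The unit `η : A → CA`: a letter of rank `k` becomes the term with that
letter at the root and ports `0,…,k-1` as its children. -/
def unitRaw (A : ℕ → Type) (k : ℕ) (x : A k) : RawTree A :=
  fun p =>
    match p with
    | [] => some (Sum.inl ⟨k, x⟩)
    | [i] => if i < k then some (Sum.inr i) else none
    | _ => none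

/-- Action of `C` on (rank-preserving) functions: node-wise relabeling. -/
def cmap {A B : ℕ → Type} (h : ∀ k, A k → B k) (t : RawTree A) : RawTree B :=
  fun p => (t p).map (Sum.map (fun x => ⟨x.1, h x.1 x.2⟩) id)

/-- The subtree of `t` rooted at node `w`. -/
def subAt {A : ℕ → Type} (t : RawTree A) (w : List ℕ) : RawTree A :=
  fun u => t (w ++ u)

/-- `t` contains a port. -/
def HasPort {A : ℕ → Type} (t : RawTree A) : Prop :=
  ∃ w j, t w = some (Sum.inr j)

/-- every subtree of `t` contains a port -/
def HasPortEverywhere {A : ℕ → Type} (t : RawTree A) : Prop :=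
  ∀ w, (t w).isSome → HasPort (subAt t w)

/-- some port name occurs at least twice in `t` -/
def PortTwice {A : ℕ → Type} (t : RawTree A) : Prop :=
  ∃ w w' j, w ≠ w' ∧ t w = some (Sum.inr j) ∧ t w' = some (Sum.inr j)

/-- subtrees at distinct nodes of `t` are distinct -/
def Antiregular {A : ℕ → Type} (t : RawTree A) : Prop :=
  ∀ w w', (t w).isSome → (t w').isSome → subAt t w = subAt t w' → w = w'

/-- every node of `t` has a descendant whose subtree is antiregular -/
def DenselyAntiregular {A : ℕ → Type} (t : RawTree A) : Prop :=
  ∀ w, (t w).isSome → ∃ u, (t (w ++ u)).isSome ∧ Antiregular (subAt t (w ++ u))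

/-- the ranked alphabet `{a,b}`, both letters of rank `2` -/
inductive AB : Type | a : AB | b : AB

def abA : ℕ → Type
  | 2 => AB
  | _ => Empty

/-- kind 1: some subtree has no ports and is not densely antiregular -/
def Kind1 (s : RawTree abA) : Prop :=
  ∃ w, (s w).isSome ∧ ¬ HasPort (subAt s w) ∧ ¬ DenselyAntiregular (subAt s w)

/-- kind 2: some subtree has no ports and every portless subtree is densely antiregular -/
def Kind2 (s : RawTree abA) : Prop :=
  (∃ w, (s w).isSome ∧ ¬ HasPort (subAt s w)) ∧
  ∀ w, (s w).isSome → ¬ HasPort (subAt s w) → DenselyAntiregular (subAt s w)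

/-- kind 3: every subtree has a port and some port name is used at least twice -/
def Kind3 (s : RawTree abA) : Prop :=
  HasPortEverywhere s ∧ PortTwice s

/-- kind 4: every subtree has a port and no port name is used twice -/
def Kind4 (s : RawTree abA) : Prop :=
  HasPortEverywhere s ∧ ¬ PortTwice s

section Aux
variable {A : ℕ → Type}

/-- navigation state after reading position `p` -/
def nav (t : OuterTree A) (p : List ℕ) : Option ((List ℕ × List ℕ) ⊕ ℕ) :=
  p.foldl (fun ost i => ost.bind (fun st => stepF A t st i)) (resolve A t [])

def readOut (t : OuterTree A) (st : (List ℕ × List ℕ) ⊕ ℕ) :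
    Option ((Σ k : ℕ, A k) ⊕ ℕ) :=
  match st with
  | Sum.inl (v, w) =>
    match t v with
    | some (Sum.inl ⟨_, s⟩) =>
      match s w with
      | some (Sum.inl x) => some (Sum.inl x)
      | _ => none
    | _ => none
  | Sum.inr j => some (Sum.inr j)

lemma flatten_eq (t : OuterTree A) (p : List ℕ) :
    flatten A t p = (nav t p).bind (readOut t) := rfl

lemma nav_nil (t : OuterTree A) : nav t [] = resolve A t [] := rfl

lemma nav_snoc (t : OuterTree A) (p : List ℕ) (i : ℕ) :
    nav t (p ++ [i]) = (nav t p).bind (fun st => stepF A t st i) := by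
  simp [nav, List.foldl_append]

lemma nav_append (t : OuterTree A) (p q : List ℕ) :
    nav t (p ++ q) =
      q.foldl (fun ost i => ost.bind (fun st => stepF A t st i)) (nav t p) := by
  simp [nav, List.foldl_append]

lemma resolve_inl (t : OuterTree A) {v : List ℕ} {z} (h : t v = some (Sum.inl z)) :
    resolve A t v = some (Sum.inl (v, ([] : List ℕ))) := by
  simp [resolve, h]

lemma stepF_letter (t : OuterTree A) {v w : List ℕ} {k s} (hv : t v = some (Sum.inl ⟨k, s⟩))
    {i : ℕ} {q} (hs : s (w ++ [i]) = some (Sum.inl q)) :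
    stepF A t (Sum.inl (v, w)) i = some (Sum.inl (v, w ++ [i])) := by
  simp [stepF, hv, hs]

lemma stepF_port (t : OuterTree A) {v w : List ℕ} {k s} (hv : t v = some (Sum.inl ⟨k, s⟩))
    {i j : ℕ} (hs : s (w ++ [i]) = some (Sum.inr j)) :
    stepF A t (Sum.inl (v, w)) i = resolve A t (v ++ [j]) := by
  simp [stepF, hv, hs]

lemma stepF_none (t : OuterTree A) {v w : List ℕ} {k s} (hv : t v = some (Sum.inl ⟨k, s⟩))
    {i : ℕ} (hs : s (w ++ [i]) = none) :
    stepF A t (Sum.inl (v, w)) i = none := by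
  simp [stepF, hv, hs]

lemma readOut_letter (t : OuterTree A) {v w : List ℕ} {k s} (hv : t v = some (Sum.inl ⟨k, s⟩))
    {q} (hs : s w = some (Sum.inl q)) :
    readOut t (Sum.inl (v, w)) = some (Sum.inl q) := by
  simp [readOut, hv, hs]

lemma subAt_subAt (T : RawTree A) (p q : List ℕ) :
    subAt (subAt T p) q = subAt T (p ++ q) := by
  funext x; simp [subAt, List.append_assoc]

lemma da_subAt {T : RawTree A} (h : DenselyAntiregular T) (p : List ℕ) :
    DenselyAntiregular (subAt T p) := by
  intro w hw
  obtain ⟨u, h1, h2⟩ := h (p ++ w) hw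
  refine ⟨u, ?_, ?_⟩
  · show (T (p ++ (w ++ u))).isSome
    rwa [← List.append_assoc]
  · rw [subAt_subAt, ← List.append_assoc]
    exact h2

end Aux
section Aux2
variable {A : ℕ → Type} {t : OuterTree A}

lemma node_of_isSome (ht : IsTerm2 A 0 t) {w : List ℕ} (h : (t w).isSome) :
    ∃ k s, t w = some (Sum.inl ⟨k, s⟩) := by
  rcases hv : t w with _ | (⟨k, s⟩ | j)
  · rw [hv] at h; simp at h
  · exact ⟨k, s, rfl⟩
  · exact absurd (ht.1.2.2.1 w j hv) (Nat.not_lt_zero j)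

def Inv (t : OuterTree A) (st : (List ℕ × List ℕ) ⊕ ℕ) : Prop :=
  ∃ v w k s, st = Sum.inl (v, w) ∧ t v = some (Sum.inl ⟨k, s⟩) ∧
    ∃ q, s w = some (Sum.inl q)

lemma inv_nav (ht : IsTerm2 A 0 t) :
    ∀ (p : List ℕ) (st), nav t p = some st → Inv t st := by
  intro p
  induction p using List.reverseRecOn with
  | nil =>
    intro st hst
    obtain ⟨k, s, hroot⟩ := ht.1.1
    rw [nav_nil, resolve_inl t hroot] at hst
    obtain ⟨kq, q, hq⟩ := (ht.2 [] k s hroot).1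
    exact ⟨[], [], k, s, (Option.some_injective _ hst).symm, hroot, ⟨kq, q⟩, hq⟩
  | append_singleton p i ih =>
    intro st hst
    rw [nav_snoc] at hst
    rcases h0 : nav t p with _ | st0
    · rw [h0] at hst; exact absurd hst (by simp)
    rw [h0] at hst
    obtain ⟨v, w, k, s, rfl, hv, q, hq⟩ := ih st0 h0
    simp only [Option.bind_some] at hst
    rcases hsw : s (w ++ [i]) with _ | (q2 | j)
    · rw [stepF_none t hv hsw] at hst; simp at hst
    · rw [stepF_letter t hv hsw] at hst
      exact ⟨v, w ++ [i], k, s, (Option.some_injective _ hst).symm, hv, q2, hsw⟩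
    · rw [stepF_port t hv hsw] at hst
      have hj : j < k := (ht.2 v k s hv).2.2.1 (w ++ [i]) j hsw
      have hsome : (t (v ++ [j])).isSome := (ht.1.2.1 v j).mpr ⟨k, s, hv, hj⟩
      obtain ⟨k3, s3, h3⟩ := node_of_isSome ht hsome
      rw [resolve_inl t h3] at hst
      obtain ⟨kq, q3, hq3⟩ := (ht.2 _ k3 s3 h3).1
      exact ⟨v ++ [j], [], k3, s3, (Option.some_injective _ hst).symm, h3, ⟨kq, q3⟩, hq3⟩

lemma flatten_isSome_of_nav (ht : IsTerm2 A 0 t) {p : List ℕ} {st}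
    (h : nav t p = some st) : (flatten A t p).isSome := by
  obtain ⟨v, w, k, s, rfl, hv, q, hq⟩ := inv_nav ht p st h
  rw [flatten_eq, h]
  simp [readOut_letter t hv hq]

lemma nav_of_flatten_isSome {p : List ℕ} (h : (flatten A t p).isSome) :
    ∃ st, nav t p = some st := by
  rw [flatten_eq] at h
  rcases hn : nav t p with _ | st
  · rw [hn] at h; simp at h
  · exact ⟨st, rfl⟩

end Aux2
section Aux3
variable {A : ℕ → Type} {t : OuterTree A}

lemma subAt_flatten_nav_eq {p1 p2 : List ℕ} (h : nav t p1 = nav t p2) :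
    subAt (flatten A t) p1 = subAt (flatten A t) p2 := by
  funext x
  show flatten A t (p1 ++ x) = flatten A t (p2 ++ x)
  rw [flatten_eq, flatten_eq, nav_append, nav_append, h]

lemma nav_inner (ht : IsTerm2 A 0 t) {p v w : List ℕ} {k s}
    (hnav : nav t p = some (Sum.inl (v, w))) (hv : t v = some (Sum.inl ⟨k, s⟩))
    (hw : ∃ q, s w = some (Sum.inl q)) :
    ∀ x : List ℕ, (s (w ++ x)).isSome →
      nav t (p ++ x) = (match s (w ++ x) with
        | some (Sum.inl _) => some (Sum.inl (v, w ++ x))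
        | some (Sum.inr j) => resolve A t (v ++ [j])
        | none => none) := by
  intro x
  induction x using List.reverseRecOn with
  | nil =>
    intro _
    obtain ⟨q, hq⟩ := hw
    simp only [List.append_nil, hq]
    exact hnav
  | append_singleton x i ih =>
    intro hsome
    rw [← List.append_assoc] at hsome
    obtain ⟨k2, x2, hkx, hik⟩ := ((ht.2 v k s hv).2.1 (w ++ x) i).mp hsome
    have ihx := ih (by rw [hkx]; rfl)
    rw [hkx] at ihx
    rw [← List.append_assoc, nav_snoc, ihx, Option.bind_some, ← List.append_assoc]
    rcases hsi : s ((w ++ x) ++ [i]) with _ | (q3 | j)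
    · rw [stepF_none t hv hsi]
    · rw [stepF_letter t hv hsi]
    · rw [stepF_port t hv hsi]

lemma nav_reach (ht : IsTerm2 A 0 t) {p v : List ℕ}
    (hnav : nav t p = some (Sum.inl (v, []))) :
    ∀ z : List ℕ, (t (v ++ z)).isSome →
      ∃ x, nav t (p ++ x) = some (Sum.inl (v ++ z, [])) := by
  intro z
  induction z using List.reverseRecOn with
  | nil => intro _; exact ⟨[], by simpa using hnav⟩
  | append_singleton z j ih =>
    intro hsome
    rw [← List.append_assoc] at hsome
    obtain ⟨k2, s2, h2, hj⟩ := (ht.1.2.1 (v ++ z) j).mp hsome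
    obtain ⟨x, hx⟩ := ih (by rw [h2]; rfl)
    obtain ⟨y, hy⟩ := (ht.2 _ k2 s2 h2).2.2.2 j hj
    have hroot := (ht.2 _ k2 s2 h2).1
    obtain ⟨kr, xr, hr⟩ := hroot
    have hnavy := nav_inner ht hx h2 ⟨⟨kr, xr⟩, hr⟩ y
      (by simp only [List.nil_append, hy]; rfl)
    simp only [List.nil_append, hy] at hnavy
    have hsome2 : (t ((v ++ z) ++ [j])).isSome := (ht.1.2.1 (v ++ z) j).mpr ⟨k2, s2, h2, hj⟩
    obtain ⟨k3, s3, h3⟩ := node_of_isSome ht hsome2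
    rw [resolve_inl t h3] at hnavy
    exact ⟨x ++ y, by rw [← List.append_assoc, hnavy, List.append_assoc]⟩

lemma nav_portless (ht : IsTerm2 A 0 t) {p v w : List ℕ} {k s}
    (hnav : nav t p = some (Sum.inl (v, w))) (hv : t v = some (Sum.inl ⟨k, s⟩))
    (hw : ∃ q, s w = some (Sum.inl q)) (hnp : ¬ HasPort (subAt s w)) :
    ∀ x : List ℕ, nav t (p ++ x) =
      (s (w ++ x)).map (fun _ => Sum.inl (v, w ++ x)) := by
  intro x
  induction x using List.reverseRecOn with
  | nil =>
    obtain ⟨q, hq⟩ := hw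
    simp only [List.append_nil, hq, Option.map_some]
    exact hnav
  | append_singleton x i ih =>
    rw [← List.append_assoc, nav_snoc, ih, ← List.append_assoc]
    rcases hsx : s (w ++ x) with _ | (q2 | j)
    · have : s ((w ++ x) ++ [i]) = none := by
        rcases hn : s ((w ++ x) ++ [i]) with _ | z
        · rfl
        · obtain ⟨k2, x2, hkx, _⟩ := ((ht.2 v k s hv).2.1 (w ++ x) i).mp (by rw [hn]; rfl)
          rw [hkx] at hsx; cases hsx
      rw [this]; rfl
    · rcases hsi : s ((w ++ x) ++ [i]) with _ | (q3 | j)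
      · rw [Option.map_some, Option.bind_some, stepF_none t hv hsi]; rfl
      · rw [Option.map_some, Option.bind_some, stepF_letter t hv hsi]; rfl
      · refine absurd ⟨x ++ [i], j, ?_⟩ hnp
        show s (w ++ (x ++ [i])) = some (Sum.inr j)
        rw [← List.append_assoc]; exact hsi
    · exact absurd ⟨x, j, hsx⟩ hnp

lemma subAt_flatten_portless (ht : IsTerm2 A 0 t) {p v w : List ℕ} {k s}
    (hnav : nav t p = some (Sum.inl (v, w))) (hv : t v = some (Sum.inl ⟨k, s⟩))
    (hw : ∃ q, s w = some (Sum.inl q)) (hnp : ¬ HasPort (subAt s w)) :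
    subAt (flatten A t) p = subAt s w := by
  funext x
  show flatten A t (p ++ x) = s (w ++ x)
  rw [flatten_eq, nav_portless ht hnav hv hw hnp x]
  rcases hsx : s (w ++ x) with _ | (q2 | j)
  · rfl
  · rw [Option.map_some, Option.bind_some, readOut_letter t hv hsx]
  · exact absurd ⟨x, j, hsx⟩ hnp

end Aux3
section Aux4
variable {A : ℕ → Type} {t : OuterTree A}

def lift (d : List ℕ) : ((List ℕ × List ℕ) ⊕ ℕ) → ((List ℕ × List ℕ) ⊕ ℕ) :=
  Sum.map (fun vw => (d ++ vw.1, vw.2)) id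

lemma subAt_apply (T : RawTree A) (p x : List ℕ) : subAt T p x = T (p ++ x) := rfl

lemma stepF_lift (t : OuterTree A) (d : List ℕ) (st : (List ℕ × List ℕ) ⊕ ℕ) (i : ℕ) :
    stepF A t (lift d st) i = (stepF A (subAt t d) st i).map (lift d) := by
  rcases st with ⟨v, w⟩ | j
  · show stepF A t (Sum.inl (d ++ v, w)) i = _
    have htv : t (d ++ v) = subAt t d v := rfl
    rcases hv : subAt t d v with _ | (⟨k, s⟩ | j)
    · simp [stepF, htv.trans hv, hv]
    · have hv' : t (d ++ v) = some (Sum.inl ⟨k, s⟩) := hv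
      rcases hsi : s (w ++ [i]) with _ | (q | j)
      · rw [stepF_none t hv' hsi, stepF_none (subAt t d) hv hsi]; rfl
      · rw [stepF_letter t hv' hsi, stepF_letter (subAt t d) hv hsi]; rfl
      · rw [stepF_port t hv' hsi, stepF_port (subAt t d) hv hsi]
        have h1 : t (d ++ (v ++ [j])) = subAt t d (v ++ [j]) := rfl
        rcases hr : subAt t d (v ++ [j]) with _ | (z | j')
        · simp [resolve, List.append_assoc, h1.trans hr, hr]
        · simp [resolve, List.append_assoc, h1.trans hr, hr, lift]
        · simp [resolve, List.append_assoc, h1.trans hr, hr, lift]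
    · have hv' : t (d ++ v) = some (Sum.inr j) := hv
      simp [stepF, hv', hv]
  · rfl

lemma readOut_lift (t : OuterTree A) (d : List ℕ) (st : (List ℕ × List ℕ) ⊕ ℕ) :
    readOut t (lift d st) = readOut (subAt t d) st := by
  rcases st with ⟨v, w⟩ | j
  · show readOut t (Sum.inl (d ++ v, w)) = _
    have htv : t (d ++ v) = subAt t d v := rfl
    rcases hv : subAt t d v with _ | (⟨k, s⟩ | j)
    · simp [readOut, htv.trans hv, hv]
    · simp [readOut, htv.trans hv, hv]
    · simp [readOut, htv.trans hv, hv]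
  · rfl

lemma nav_lift (ht : IsTerm2 A 0 t) {d : List ℕ} {k s}
    (hd : t d = some (Sum.inl ⟨k, s⟩)) {p : List ℕ}
    (hp : nav t p = some (Sum.inl (d, []))) :
    ∀ x : List ℕ, nav t (p ++ x) = (nav (subAt t d) x).map (lift d) := by
  intro x
  induction x using List.reverseRecOn with
  | nil =>
    have : subAt t d [] = some (Sum.inl ⟨k, s⟩) := by
      show t (d ++ []) = _; rwa [List.append_nil]
    rw [List.append_nil, nav_nil, resolve_inl (subAt t d) this, hp]
    simp [lift]
  | append_singleton x i ih =>
    rw [← List.append_assoc, nav_snoc, nav_snoc, ih]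
    rcases hn : nav (subAt t d) x with _ | st
    · rfl
    · simp only [Option.map_some, Option.bind_some]
      rw [stepF_lift]

lemma subAt_flatten_eq_flatten_subAt (ht : IsTerm2 A 0 t) {d : List ℕ} {k s}
    (hd : t d = some (Sum.inl ⟨k, s⟩)) {p : List ℕ}
    (hp : nav t p = some (Sum.inl (d, []))) :
    subAt (flatten A t) p = flatten A (subAt t d) := by
  funext x
  show flatten A t (p ++ x) = flatten A (subAt t d) x
  rw [flatten_eq, flatten_eq, nav_lift ht hd hp x]
  rcases nav (subAt t d) x with _ | st
  · rfl
  · simp only [Option.map_some, Option.bind_some]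
    exact readOut_lift t d st

lemma nav_prefix {p v w0 : List ℕ} (h0 : nav t p = some (Sum.inl (v, w0))) :
    ∀ (x d w : List ℕ), nav t (p ++ x) = some (Sum.inl (d, w)) → v <+: d := by
  intro x
  induction x using List.reverseRecOn with
  | nil =>
    intro d w h
    rw [List.append_nil, h0] at h
    obtain ⟨h1, _⟩ := Prod.mk.injEq .. ▸ Sum.inl.inj (Option.some_injective _ h)
    exact h1 ▸ List.prefix_refl v
  | append_singleton x i ih =>
    intro d w h
    rw [← List.append_assoc, nav_snoc] at h
    rcases h1 : nav t (p ++ x) with _ | st1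
    · rw [h1] at h; cases h
    rw [h1, Option.bind_some] at h
    rcases st1 with ⟨v1, w1⟩ | j1
    · have hpre := ih v1 w1 h1
      rcases hv1 : t v1 with _ | (⟨k1, s1⟩ | j)
      · simp [stepF, hv1] at h
      · rcases hsi : s1 (w1 ++ [i]) with _ | (q | j)
        · rw [stepF_none t hv1 hsi] at h; cases h
        · rw [stepF_letter t hv1 hsi] at h
          have := (Prod.mk.injEq .. ▸ Sum.inl.inj (Option.some_injective _ h)).1
          exact this ▸ hpre
        · rw [stepF_port t hv1 hsi] at h
          rcases hr : t (v1 ++ [j]) with _ | (z | j')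
          · simp [resolve, hr] at h
          · simp only [resolve, hr] at h
            have := (Prod.mk.injEq .. ▸ Sum.inl.inj (Option.some_injective _ h)).1
            exact this ▸ hpre.trans (List.prefix_append v1 [j])
          · simp only [resolve, hr] at h; cases Option.some_injective _ h
      · simp [stepF, hv1] at h
    · cases h

lemma flatten_nil_isSome {k s} (h : t [] = some (Sum.inl ⟨k, s⟩))
    {q} (hs : s [] = some (Sum.inl q)) : (flatten A t []).isSome := by
  rw [flatten_eq, nav_nil, resolve_inl t h, Option.bind_some, readOut_letter t h hs]
  rfl

end Aux4
end OmegaClone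

namespace OmegaClone

/-- Lemma 6 of the paper: for `t ∈ C(C{a,b})` with no ports
(rank 0), the flattening `μ(t)` is densely antiregular iff (i) no node of `t`
is labeled by a term of kind 1, and (ii) every node of `t` has a descendant `v`
such that either the label of `v` is of kind 2, or all nodes of `t|_v` are of
kind 4 and `μ(t|_v)` is densely antiregular. -/
theorem flatten_denselyAntiregular_iff
    (t : OuterTree abA) (ht : IsTerm2 abA 0 t) :
    DenselyAntiregular (flatten abA t) ↔
      ((∀ (v : List ℕ) (k : ℕ) (r : RawTree abA),
          t v = some (Sum.inl ⟨k, r⟩) → ¬ Kind1 r) ∧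
       (∀ v : List ℕ, (t v).isSome → ∃ u : List ℕ, (t (v ++ u)).isSome ∧
          ((∃ (k : ℕ) (r : RawTree abA),
              t (v ++ u) = some (Sum.inl ⟨k, r⟩) ∧ Kind2 r) ∨
           ((∀ (p : List ℕ) (k : ℕ) (r : RawTree abA),
               t (v ++ u ++ p) = some (Sum.inl ⟨k, r⟩) → Kind4 r) ∧
            DenselyAntiregular (flatten abA (subAt t (v ++ u))))))) := by
  obtain ⟨kr0, s0, hroot⟩ := ht.1.1
  have hnavnil : nav t [] = some (Sum.inl (([] : List ℕ), ([] : List ℕ))) := by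
    rw [nav_nil, resolve_inl t hroot]
  constructor
  · intro hDA
    have hi : ∀ (v : List ℕ) (k : ℕ) (r : RawTree abA),
        t v = some (Sum.inl ⟨k, r⟩) → ¬ Kind1 r := by
      intro v k r hv hk1
      obtain ⟨w0, hsome0, hnp0, hnda0⟩ := hk1
      rcases hw0 : r w0 with _ | (q0 | j0)
      · rw [hw0] at hsome0; simp at hsome0
      · -- letter
        obtain ⟨x, hx⟩ := nav_reach ht hnavnil v (by exact hv ▸ rfl)
        simp only [List.nil_append] at hx
        obtain ⟨krr, xrr, hrr⟩ := (ht.2 v k r hv).1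
        have hnav2 := nav_inner ht hx hv ⟨⟨krr, xrr⟩, hrr⟩ w0
          (by simp only [List.nil_append, hw0]; rfl)
        simp only [List.nil_append, hw0] at hnav2
        have hsubeq := subAt_flatten_portless ht hnav2 hv ⟨q0, hw0⟩ hnp0
        have hdar : DenselyAntiregular (subAt r w0) := by
          rw [← hsubeq]; exact da_subAt hDA (x ++ w0)
        exact hnda0 hdar
      · exact hnp0 ⟨[], j0, by show r (w0 ++ []) = _; rwa [List.append_nil]⟩
    refine ⟨hi, ?_⟩
    intro v hv
    by_cases hcase1 : ∃ (u : List ℕ) (k : ℕ) (r : RawTree abA) (w : List ℕ),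
        t (v ++ u) = some (Sum.inl ⟨k, r⟩) ∧ (r w).isSome ∧ ¬ HasPort (subAt r w)
    · obtain ⟨u, k, r, w, hequ, hsw, hnp⟩ := hcase1
      refine ⟨u, by rw [hequ]; rfl, Or.inl ⟨k, r, hequ, ⟨⟨w, hsw, hnp⟩, ?_⟩⟩⟩
      intro w' h1 h2
      by_contra hnd
      exact hi (v ++ u) k r hequ ⟨w', h1, h2, hnd⟩
    · push_neg at hcase1
      by_cases hC : ∀ u : List ℕ, (t (v ++ u)).isSome →
          ∃ (z : List ℕ) (k : ℕ) (r : RawTree abA),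
            t (v ++ u ++ z) = some (Sum.inl ⟨k, r⟩) ∧ PortTwice r
      · exfalso
        obtain ⟨pv, hpv⟩ := nav_reach ht hnavnil v hv
        simp only [List.nil_append] at hpv
        have hfs : (flatten abA t pv).isSome := flatten_isSome_of_nav ht hpv
        obtain ⟨U, hUsome, hUanti⟩ := hDA pv hfs
        obtain ⟨stq, hstq⟩ := nav_of_flatten_isSome hUsome
        obtain ⟨d, w, kd, sd, rfl, hd, qd, hqd⟩ := inv_nav ht (pv ++ U) stq hstq
        obtain ⟨u', rfl⟩ := nav_prefix hpv U d w hstq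
        have hportw : HasPort (subAt sd w) :=
          hcase1 u' kd sd w hd (by rw [hqd]; rfl)
        obtain ⟨x1, j0, hport⟩ := hportw
        have hport' : sd (w ++ x1) = some (Sum.inr j0) := hport
        have hnav3 := nav_inner ht hstq hd ⟨qd, hqd⟩ x1 (by rw [hport']; rfl)
        simp only [hport'] at hnav3
        have hj0 : j0 < kd := (ht.2 _ kd sd hd).2.2.1 (w ++ x1) j0 hport'
        have hcsome : (t ((v ++ u') ++ [j0])).isSome :=
          (ht.1.2.1 (v ++ u') j0).mpr ⟨kd, sd, hd, hj0⟩
        obtain ⟨kc, sc, hc⟩ := node_of_isSome ht hcsome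
        rw [resolve_inl t hc] at hnav3
        obtain ⟨z, kE, rE, hEeq, hE3⟩ := hC (u' ++ [j0])
          (by rw [← List.append_assoc]; exact hcsome)
        have hE' : t (((v ++ u') ++ [j0]) ++ z) = some (Sum.inl ⟨kE, rE⟩) := by
          rw [List.append_assoc v u' [j0]]; exact hEeq
        obtain ⟨x2, hx2⟩ := nav_reach ht hnav3 z (by rw [hE']; rfl)
        obtain ⟨y, y', j, hyne, hy, hy'⟩ := hE3
        obtain ⟨kr2, xr2, hr2⟩ := (ht.2 _ kE rE hE').1
        have navY := nav_inner ht hx2 hE' ⟨⟨kr2, xr2⟩, hr2⟩ y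
          (by simp only [List.nil_append, hy]; rfl)
        simp only [List.nil_append, hy] at navY
        have navY' := nav_inner ht hx2 hE' ⟨⟨kr2, xr2⟩, hr2⟩ y'
          (by simp only [List.nil_append, hy']; rfl)
        simp only [List.nil_append, hy'] at navY'
        have hsubeq := subAt_flatten_nav_eq (navY.trans navY'.symm)
        have hjE : j < kE := (ht.2 _ kE rE hE').2.2.1 y j hy
        have hjsome : (t (((((v ++ u') ++ [j0]) ++ z)) ++ [j])).isSome :=
          (ht.1.2.1 _ j).mpr ⟨kE, rE, hE', hjE⟩
        obtain ⟨k4, s4, h4⟩ := node_of_isSome ht hjsome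
        have hres : resolve abA t ((((v ++ u') ++ [j0]) ++ z) ++ [j]) =
            some (Sum.inl (((((v ++ u') ++ [j0]) ++ z) ++ [j]), ([] : List ℕ))) :=
          resolve_inl t h4
        have hisY : (flatten abA t ((((pv ++ U) ++ x1) ++ x2) ++ y)).isSome :=
          flatten_isSome_of_nav ht (navY.trans hres)
        have hisY' : (flatten abA t ((((pv ++ U) ++ x1) ++ x2) ++ y')).isSome :=
          flatten_isSome_of_nav ht (navY'.trans hres)
        have hposy : (pv ++ U) ++ (x1 ++ (x2 ++ y)) = (((pv ++ U) ++ x1) ++ x2) ++ y := by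
          simp [List.append_assoc]
        have hposy' : (pv ++ U) ++ (x1 ++ (x2 ++ y')) = (((pv ++ U) ++ x1) ++ x2) ++ y' := by
          simp [List.append_assoc]
        have heq : x1 ++ (x2 ++ y) = x1 ++ (x2 ++ y') := by
          apply hUanti
          · show (flatten abA t ((pv ++ U) ++ (x1 ++ (x2 ++ y)))).isSome
            rw [hposy]; exact hisY
          · show (flatten abA t ((pv ++ U) ++ (x1 ++ (x2 ++ y')))).isSome
            rw [hposy']; exact hisY'
          · rw [subAt_subAt, subAt_subAt, hposy, hposy']
            exact hsubeq
        exact hyne (List.append_cancel_left (List.append_cancel_left heq))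
      · push_neg at hC
        obtain ⟨u0, hu0some, hnot3⟩ := hC
        refine ⟨u0, hu0some, Or.inr ⟨?_, ?_⟩⟩
        · intro p k r hpr
          refine ⟨?_, hnot3 p k r hpr⟩
          intro w hw
          exact hcase1 (u0 ++ p) k r w (by rw [List.append_assoc] at hpr; exact hpr) hw
        · obtain ⟨x0, hx0⟩ := nav_reach ht hnavnil (v ++ u0) hu0some
          simp only [List.nil_append] at hx0
          obtain ⟨kd, sd, hd⟩ := node_of_isSome ht hu0some
          rw [← subAt_flatten_eq_flatten_subAt ht hd hx0]
          exact da_subAt hDA x0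
  · rintro ⟨hi, hii⟩
    intro p hp
    obtain ⟨st, hst⟩ := nav_of_flatten_isSome hp
    obtain ⟨v, w, k, s, rfl, hv, qvw, hqvw⟩ := inv_nav ht p st hst
    by_cases hport : HasPort (subAt s w)
    · obtain ⟨x1, j, hx1⟩ := hport
      have hx1' : s (w ++ x1) = some (Sum.inr j) := hx1
      have hnav1 := nav_inner ht hst hv ⟨qvw, hqvw⟩ x1 (by rw [hx1']; rfl)
      simp only [hx1'] at hnav1
      have hj : j < k := (ht.2 v k s hv).2.2.1 (w ++ x1) j hx1'
      have hcsome : (t (v ++ [j])).isSome := (ht.1.2.1 v j).mpr ⟨k, s, hv, hj⟩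
      obtain ⟨kc, sc, hc⟩ := node_of_isSome ht hcsome
      rw [resolve_inl t hc] at hnav1
      obtain ⟨u0, hu0some, hor⟩ := hii (v ++ [j]) hcsome
      obtain ⟨x2, hx2⟩ := nav_reach ht hnav1 u0 hu0some
      rcases hor with ⟨k2, r2, heq2, hK2⟩ | ⟨_, hDA'⟩
      · obtain ⟨⟨y, hy1, hy2⟩, hall⟩ := hK2
        rcases hyv : r2 y with _ | (qy | jy)
        · rw [hyv] at hy1; simp at hy1
        · obtain ⟨kr, xr, hr⟩ := (ht.2 _ k2 r2 heq2).1
          have hnavy := nav_inner ht hx2 heq2 ⟨⟨kr, xr⟩, hr⟩ y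
            (by simp only [List.nil_append, hyv]; rfl)
          simp only [List.nil_append, hyv] at hnavy
          have hsub := subAt_flatten_portless ht hnavy heq2 ⟨qy, hyv⟩ hy2
          have hda2 := hall y hy1 hy2
          obtain ⟨u1, ha1, ha2⟩ := hda2 []
            (by show (r2 (y ++ [])).isSome; rw [List.append_nil, hyv]; rfl)
          simp only [List.nil_append] at ha1 ha2
          have hpos : p ++ (x1 ++ (x2 ++ (y ++ u1))) = (((p ++ x1) ++ x2) ++ y) ++ u1 := by
            simp [List.append_assoc]
          refine ⟨x1 ++ (x2 ++ (y ++ u1)), ?_, ?_⟩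
          · show (subAt (flatten abA t) p (x1 ++ (x2 ++ (y ++ u1)))).isSome
            show (flatten abA t (p ++ (x1 ++ (x2 ++ (y ++ u1))))).isSome
            rw [hpos]
            show (subAt (flatten abA t) (((p ++ x1) ++ x2) ++ y) u1).isSome
            rw [hsub]
            exact ha1
          · show Antiregular (subAt (flatten abA t) (p ++ (x1 ++ (x2 ++ (y ++ u1)))))
            rw [hpos, ← subAt_subAt, hsub]
            exact ha2
        · exact absurd ⟨[], jy, by show r2 (y ++ []) = _; rwa [List.append_nil]⟩ hy2
      · obtain ⟨kd, sd2, hd2⟩ := node_of_isSome ht hu0some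
        have hsub := subAt_flatten_eq_flatten_subAt ht hd2 hx2
        have hr0 : ((flatten abA (subAt t ((v ++ [j]) ++ u0))) []).isSome := by
          have hst' : subAt t ((v ++ [j]) ++ u0) [] = some (Sum.inl ⟨kd, sd2⟩) := by
            show t (((v ++ [j]) ++ u0) ++ []) = _; rwa [List.append_nil]
          obtain ⟨kk, qq, hqq⟩ := (ht.2 _ kd sd2 hd2).1
          exact flatten_nil_isSome hst' hqq
        obtain ⟨u1, ha1, ha2⟩ := hDA' [] hr0
        simp only [List.nil_append] at ha1 ha2
        have hpos : p ++ (x1 ++ (x2 ++ u1)) = ((p ++ x1) ++ x2) ++ u1 := by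
          simp [List.append_assoc]
        refine ⟨x1 ++ (x2 ++ u1), ?_, ?_⟩
        · show (flatten abA t (p ++ (x1 ++ (x2 ++ u1)))).isSome
          rw [hpos]
          show (subAt (flatten abA t) ((p ++ x1) ++ x2) u1).isSome
          rw [hsub]
          exact ha1
        · show Antiregular (subAt (flatten abA t) (p ++ (x1 ++ (x2 ++ u1))))
          rw [hpos, ← subAt_subAt, hsub]
          exact ha2
    · have hsub := subAt_flatten_portless ht hst hv ⟨qvw, hqvw⟩ hport
      have hda : DenselyAntiregular (subAt s w) := by
        by_contra hnd
        exact hi v k s hv ⟨w, by rw [hqvw]; rfl, hport, hnd⟩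
      obtain ⟨u1, ha1, ha2⟩ := hda []
        (by show (s (w ++ [])).isSome; rw [List.append_nil, hqvw]; rfl)
      simp only [List.nil_append] at ha1 ha2
      refine ⟨u1, ?_, ?_⟩
      · show (subAt (flatten abA t) p u1).isSome
        rw [hsub]
        exact ha1
      · show Antiregular (subAt (flatten abA t) (p ++ u1))
        rw [← subAt_subAt, hsub]
        exact ha2

end OmegaClone
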